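/- arXiv:1612.01031 — 3 statements merged into one kernel-verified Lean document; each statement's English description precedes it below -/
import Mathlib

section
/- If B is a p×p matrix over a graded integral domain A expressing homogeneous elements n_i = Σ_j B_{ij} m_j in terms of a homogeneous basis m_1,...,m_p of a free graded module, det(B) ≠ 0, and Σ deg(n_i) = Σ deg(m_i), then after suitable reindexing deg(n_i) = deg(m_i) for all i. -/
/-- Let `A` be an ℕ-graded commutative integral domain, `M` a free `A`-module
with homogeneous basis `m₁,...,m_p` of degrees `dm i`, and let `B` be a `p × p` matrix over `A`
expressing homogeneous elements `nᵢ = ∑ⱼ B_{ij} mⱼ` of degrees `dn i`, i.e. each nonzero entry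
`B_{ij}` is homogeneous with `dn i = deg B_{ij} + dm j`.  If `det B ≠ 0` and
`∑ dn i = ∑ dm i`, then after suitable reindexing `dn i = dm i` for all `i`. -/
theorem stmt1 {A : Type*} [CommRing A] [IsDomain A]
    (𝒜 : ℕ → AddSubgroup A) [GradedRing 𝒜]
    {M : Type*} [AddCommGroup M] [Module A M]
    {p : ℕ} (bm : Module.Basis (Fin p) A M) (dm dn : Fin p → ℕ)
    (B : Matrix (Fin p) (Fin p) A)
    (n : Fin p → M) (hn : ∀ i, n i = ∑ j, B i j • bm j)
    (hB : ∀ i j, B i j ≠ 0 → ∃ c, B i j ∈ 𝒜 c ∧ dn i = c + dm j)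
    (hdet : B.det ≠ 0)
    (hsum : ∑ i, dn i = ∑ i, dm i) :
    ∃ σ : Equiv.Perm (Fin p), ∀ i, dn i = dm (σ i) := by
  -- From det B ≠ 0, extract a permutation whose product of entries is nonzero.
  have h : ∃ τ : Equiv.Perm (Fin p), ∀ i, B (τ i) i ≠ 0 := by
    by_contra hc
    push_neg at hc
    apply hdet
    rw [Matrix.det_apply]
    refine Finset.sum_eq_zero fun τ _ => ?_
    obtain ⟨i, hi⟩ := hc τ
    rw [Finset.prod_eq_zero (f := fun j => B (τ j) j) (Finset.mem_univ i) hi, smul_zero]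
  obtain ⟨τ, hτ⟩ := h
  -- choose degrees c i for each nonzero entry B (τ i) i
  choose c hc hd using fun i => hB (τ i) i (hτ i)
  have hsum2 : ∑ i, dn (τ i) = ∑ i, dn i := Equiv.sum_comp τ dn
  have : ∑ i, (c i + dm i) = ∑ i, dm i := by
    rw [← hsum, ← hsum2]
    exact Finset.sum_congr rfl fun i _ => (hd i).symm
  rw [Finset.sum_add_distrib] at this
  have hczero : ∀ i ∈ Finset.univ, c i = 0 := by
    rw [← Finset.sum_eq_zero_iff]
    omega
  refine ⟨τ.symm, fun i => ?_⟩
  have := hd (τ.symm i)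
  rw [hczero (τ.symm i) (Finset.mem_univ _), zero_add, Equiv.apply_symm_apply] at this
  exact this
end

section
/- For the group W = G(r,p,ℓ) with 1 ≤ p < r, p dividing r, having N = C(ℓ,2)·r + ℓ(r/p - 1) reflections and N* = C(ℓ,2)·r + ℓ reflecting hyperplanes, exponents e_i = ir - 1 for i < ℓ, e_ℓ = ℓr/p - 1, and coexponents e_k* = (k-1)r + 1, the degree sum Σ_{I ⊆[ℓ],|I|=m, k≤ℓ-m}(e_I + e_k*) + Σ_{I⊆[ℓ],|I|=m-1, k≤ℓ-m+1}(e_I + e_k* - 1) equals (ℓ-1)·C(ℓ-1,m-1)·N + C(ℓ-1,m)·N*. -/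
open Finset

lemma gauss2 (K : ℕ) : ∑ i ∈ Icc 1 K, (i : ℤ) = ((K + 1).choose 2 : ℤ) := by
  induction K with
  | zero => simp
  | succ K ih =>
      rw [Finset.sum_Icc_succ_top (by omega), ih]
      have h : (K + 1 + 1).choose 2 = (K + 1).choose 1 + (K + 1).choose 2 :=
        Nat.choose_succ_succ _ _
      rw [h, Nat.choose_one_right]
      push_cast
      ring

lemma gauss1 (K : ℕ) : ∑ k ∈ Icc 1 K, ((k : ℤ) - 1) = (K.choose 2 : ℤ) := by
  have h1 : ∑ k ∈ Icc 1 K, ((k : ℤ) - 1) = (∑ k ∈ Icc 1 K, (k : ℤ)) - K := by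
    rw [Finset.sum_sub_distrib, Finset.sum_const, Nat.card_Icc]
    simp
  rw [h1, gauss2]
  have h : (K + 1).choose 2 = K.choose 1 + K.choose 2 := Nat.choose_succ_succ _ _
  rw [h, Nat.choose_one_right]
  push_cast
  ring

lemma countAux {s : Finset ℕ} {i : ℕ} (hi : i ∈ s) (n : ℕ) :
    ((s.powersetCard (n + 1)).filter (fun I => i ∈ I)).card = (s.card - 1).choose n := by
  have h : ((s.powersetCard (n + 1)).filter (fun I => i ∈ I)).card
      = ((s.erase i).powersetCard n).card := by
    refine Finset.card_bij' (fun I _ => I.erase i) (fun J _ => insert i J)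
      ?_ ?_ ?_ ?_
    · intro I hI
      simp only [Finset.mem_filter, Finset.mem_powersetCard] at hI
      simp only [Finset.mem_powersetCard]
      refine ⟨Finset.erase_subset_erase i hI.1.1, ?_⟩
      rw [Finset.card_erase_of_mem hI.2, hI.1.2]
      omega
    · intro J hJ
      simp only [Finset.mem_powersetCard] at hJ
      have hiJ : i ∉ J := fun h => (Finset.mem_erase.mp (hJ.1 h)).1 rfl
      simp only [Finset.mem_filter, Finset.mem_powersetCard]
      refine ⟨⟨Finset.insert_subset hi (hJ.1.trans (Finset.erase_subset _ _)), ?_⟩,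
        Finset.mem_insert_self _ _⟩
      rw [Finset.card_insert_of_notMem hiJ, hJ.2]
    · intro I hI
      simp only [Finset.mem_filter] at hI
      exact Finset.insert_erase hI.2
    · intro J hJ
      simp only [Finset.mem_powersetCard] at hJ
      have hiJ : i ∉ J := fun h => (Finset.mem_erase.mp (hJ.1 h)).1 rfl
      exact Finset.erase_insert hiJ
  rw [h, Finset.card_powersetCard, Finset.card_erase_of_mem hi]

lemma sumPow (s : Finset ℕ) (n : ℕ) (f : ℕ → ℤ) :
    ∑ I ∈ s.powersetCard (n + 1), ∑ i ∈ I, f i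
      = ((s.card - 1).choose n : ℤ) * ∑ i ∈ s, f i := by
  have h1 : ∀ I ∈ s.powersetCard (n + 1), ∑ i ∈ I, f i
      = ∑ i ∈ s, if i ∈ I then f i else 0 := by
    intro I hI
    rw [Finset.sum_ite_mem, Finset.inter_eq_right.mpr (Finset.mem_powersetCard.mp hI).1]
  rw [Finset.sum_congr rfl h1, Finset.sum_comm]
  have h2 : ∀ i ∈ s, (∑ I ∈ s.powersetCard (n + 1), if i ∈ I then f i else 0)
      = ((s.card - 1).choose n : ℤ) * f i := by
    intro i hi
    rw [← Finset.sum_filter, Finset.sum_const, countAux hi n, nsmul_eq_mul]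
  rw [Finset.sum_congr rfl h2, ← Finset.mul_sum]

lemma sumPow' (s : Finset ℕ) (n : ℕ) (f : ℕ → ℤ) :
    (s.card : ℤ) * ∑ I ∈ s.powersetCard n, ∑ i ∈ I, f i
      = (n : ℤ) * (s.card.choose n : ℤ) * ∑ i ∈ s, f i := by
  cases n with
  | zero => simp
  | succ n =>
      rw [sumPow]
      rcases Nat.eq_zero_or_pos s.card with h0 | h0
      · rw [h0]
        simp [Nat.choose_eq_zero_of_lt (Nat.succ_pos n)]
      · have hc : s.card - 1 + 1 = s.card := by omega
        have h := Nat.add_one_mul_choose_eq (s.card - 1) n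
        rw [hc] at h
        have hz : (s.card : ℤ) * (((s.card - 1).choose n : ℕ) : ℤ)
            = ((s.card.choose (n + 1) : ℕ) : ℤ) * ((n : ℤ) + 1) := by exact_mod_cast h
        linear_combination (norm := (push_cast; ring1)) (∑ i ∈ s, f i) * hz

lemma tri (n m : ℕ) (hmn : m ≤ n) :
    n.choose m * (n - m).choose 2 = n.choose 2 * (n - 2).choose m := by
  rcases le_or_gt (m + 2) n with h | h
  · have key := Nat.choose_mul (n := n) (show 2 ≤ n - m by omega)
    rw [Nat.choose_symm hmn] at key
    rw [key]
    congr 1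
    rw [show n - m - 2 = (n - 2) - m by omega, Nat.choose_symm (by omega)]
  · rcases le_or_gt 2 n with h2 | h2
    · rw [Nat.choose_eq_zero_of_lt (show n - m < 2 by omega),
        Nat.choose_eq_zero_of_lt (show n - 2 < m by omega)]
      simp
    · rw [Nat.choose_eq_zero_of_lt (show n - m < 2 by omega),
        Nat.choose_eq_zero_of_lt h2]
      simp

lemma key2lem (m' a : ℕ) :
    (m' + 1 + a).choose (m' + 1) * a.choose 2 + (m' + 1 + a).choose m' * (a + 1).choose 2
      = (m' + a).choose (m' + 1) * (m' + 1 + a).choose 2 := by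
  cases a with
  | zero => simp [Nat.choose_eq_zero_of_lt (show m' < m' + 1 by omega)]
  | succ a =>
      have h1 : (m' + 1 + (a + 1)).choose (m' + 1) * (a + 1).choose 2
          = (m' + 1 + (a + 1)).choose 2 * (m' + 1 + (a + 1) - 2).choose (m' + 1) := by
        have := tri (m' + 1 + (a + 1)) (m' + 1) (by omega)
        rwa [show m' + 1 + (a + 1) - (m' + 1) = a + 1 by omega] at this
      have h2 : (m' + 1 + (a + 1)).choose m' * (a + 1 + 1).choose 2
          = (m' + 1 + (a + 1)).choose 2 * (m' + 1 + (a + 1) - 2).choose m' := by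
        have := tri (m' + 1 + (a + 1)) m' (by omega)
        rwa [show m' + 1 + (a + 1) - m' = a + 1 + 1 by omega] at this
      rw [h1, h2, show m' + 1 + (a + 1) - 2 = m' + a by omega]
      have hp : (m' + a + 1).choose (m' + 1) = (m' + a).choose m' + (m' + a).choose (m' + 1) :=
        Nat.choose_succ_succ _ _
      rw [show m' + (a + 1) = m' + a + 1 by omega, hp]
      ring

/-- For the group `W = G(r,p,ℓ)` with `1 ≤ p < r`, `p ∣ r`, having
`N = C(ℓ,2)·r + ℓ(r/p - 1)` reflections and `N* = C(ℓ,2)·r + ℓ` reflecting hyperplanes,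
exponents `eᵢ = i·r - 1` for `i < ℓ`, `e_ℓ = ℓr/p - 1`, and coexponents `e_k* = (k-1)·r + 1`,
the degree sum of the candidate basis `𝓑^{(ℓ,m)}` for `1 ≤ m ≤ ℓ`,
`∑_{I⊆[ℓ],|I|=m, k ≤ ℓ-m} (e_I + e_k*) + ∑_{I⊆[ℓ],|I|=m-1, k ≤ ℓ-m+1} (e_I + e_k* - 1)`,
equals `(ℓ-1)·C(ℓ-1,m-1)·N + C(ℓ-1,m)·N*`. -/
theorem stmt18 (r p ℓ m : ℕ) (hp1 : 1 ≤ p) (hpr : p < r) (hdvd : p ∣ r)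
    (hm : 1 ≤ m) (hmℓ : m ≤ ℓ)
    (e : ℕ → ℤ) (he : ∀ i, 1 ≤ i → i < ℓ → e i = (i : ℤ) * r - 1)
    (heℓ : e ℓ = (ℓ : ℤ) * (r / p : ℕ) - 1)
    (estar : ℕ → ℤ) (hestar : ∀ k, estar k = ((k : ℤ) - 1) * r + 1)
    (N Nstar : ℤ)
    (hN : N = (Nat.choose ℓ 2 : ℤ) * r + ℓ * ((r / p : ℕ) - 1))
    (hNstar : Nstar = (Nat.choose ℓ 2 : ℤ) * r + ℓ) :
    (∑ I ∈ (Finset.Icc 1 ℓ).powersetCard m, ∑ k ∈ Finset.Icc 1 (ℓ - m),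
        ((∑ i ∈ I, e i) + estar k)) +
      (∑ I ∈ (Finset.Icc 1 ℓ).powersetCard (m - 1), ∑ k ∈ Finset.Icc 1 (ℓ - m + 1),
        ((∑ i ∈ I, e i) + estar k - 1)) =
    ((ℓ : ℤ) - 1) * (Nat.choose (ℓ - 1) (m - 1) : ℤ) * N + (Nat.choose (ℓ - 1) m : ℤ) * Nstar := by
  obtain ⟨m', rfl⟩ : ∃ m', m = m' + 1 := ⟨m - 1, by omega⟩
  obtain ⟨a, rfl⟩ : ∃ a, ℓ = m' + 1 + a := ⟨ℓ - (m' + 1), by omega⟩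
  have hcard : (Icc 1 (m' + 1 + a)).card = m' + 1 + a := by rw [Nat.card_Icc]; omega
  -- sum of coexponents
  have hB : ∀ K : ℕ, ∑ k ∈ Icc 1 K, estar k = (r : ℤ) * (K.choose 2 : ℤ) + K := by
    intro K
    have hcon : ∀ k ∈ Icc 1 K, estar k = ((k : ℤ) - 1) * r + 1 := fun k _ => hestar k
    rw [Finset.sum_congr rfl hcon, Finset.sum_add_distrib, ← Finset.sum_mul, gauss1,
      Finset.sum_const, Nat.card_Icc]
    simp only [Nat.add_sub_cancel, nsmul_eq_mul, mul_one]
    ring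
  -- sum of exponents equals N
  have hS : ∑ i ∈ Icc 1 (m' + 1 + a), e i = N := by
    rw [show m' + 1 + a = m' + a + 1 by omega, Finset.sum_Icc_succ_top (by omega)]
    have h1 : ∀ i ∈ Icc 1 (m' + a), e i = (i : ℤ) * r - 1 := by
      intro i hi
      rw [Finset.mem_Icc] at hi
      exact he i hi.1 (by omega)
    have heℓ' : e (m' + a + 1) = ((m' + 1 + a : ℕ) : ℤ) * ((r / p : ℕ) : ℤ) - 1 := by
      rw [show m' + a + 1 = m' + 1 + a by omega]
      exact heℓ
    rw [Finset.sum_congr rfl h1, Finset.sum_sub_distrib, ← Finset.sum_mul, gauss2,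
      Finset.sum_const, Nat.card_Icc]
    simp only [Nat.add_sub_cancel, nsmul_eq_mul, mul_one]
    rw [heℓ', hN, show m' + a + 1 = m' + 1 + a by omega]
    push_cast
    try ring
  -- key counting identities for the powerset sums
  have key1 : ((m' + 1 + a : ℕ) : ℤ) * ∑ I ∈ (Icc 1 (m' + 1 + a)).powersetCard (m' + 1),
        ∑ i ∈ I, e i
      = ((m' : ℤ) + 1) * ((m' + 1 + a).choose (m' + 1) : ℤ) * N := by
    have h := sumPow' (Icc 1 (m' + 1 + a)) (m' + 1) e
    rw [hcard, hS] at h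
    rw [h]
    push_cast
    try ring
  have key2 : ((m' + 1 + a : ℕ) : ℤ) * ∑ I ∈ (Icc 1 (m' + 1 + a)).powersetCard m',
        ∑ i ∈ I, e i
      = (m' : ℤ) * ((m' + 1 + a).choose m' : ℤ) * N := by
    have h := sumPow' (Icc 1 (m' + 1 + a)) m' e
    rw [hcard, hS] at h
    rw [h]
  -- rewrite the two double sums
  have hL1 : ∑ I ∈ (Icc 1 (m' + 1 + a)).powersetCard (m' + 1), ∑ k ∈ Icc 1 a,
        ((∑ i ∈ I, e i) + estar k)
      = (a : ℤ) * (∑ I ∈ (Icc 1 (m' + 1 + a)).powersetCard (m' + 1), ∑ i ∈ I, e i)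
        + ((m' + 1 + a).choose (m' + 1) : ℤ) * ((r : ℤ) * (a.choose 2 : ℤ) + (a : ℤ)) := by
    have hin : ∀ I ∈ (Icc 1 (m' + 1 + a)).powersetCard (m' + 1),
        ∑ k ∈ Icc 1 a, ((∑ i ∈ I, e i) + estar k)
          = (a : ℤ) * (∑ i ∈ I, e i) + ((r : ℤ) * (a.choose 2 : ℤ) + (a : ℤ)) := by
      intro I _
      rw [Finset.sum_add_distrib, Finset.sum_const, hB, Nat.card_Icc]
      simp only [Nat.add_sub_cancel, nsmul_eq_mul]
      try ring
    rw [Finset.sum_congr rfl hin, Finset.sum_add_distrib, ← Finset.mul_sum,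
      Finset.sum_const, Finset.card_powersetCard, hcard, nsmul_eq_mul]
  have hL2 : ∑ I ∈ (Icc 1 (m' + 1 + a)).powersetCard m', ∑ k ∈ Icc 1 (a + 1),
        ((∑ i ∈ I, e i) + estar k - 1)
      = ((a : ℤ) + 1) * (∑ I ∈ (Icc 1 (m' + 1 + a)).powersetCard m', ∑ i ∈ I, e i)
        + ((m' + 1 + a).choose m' : ℤ) * ((r : ℤ) * (((a + 1).choose 2 : ℕ) : ℤ)) := by
    have hin : ∀ I ∈ (Icc 1 (m' + 1 + a)).powersetCard m',
        ∑ k ∈ Icc 1 (a + 1), ((∑ i ∈ I, e i) + estar k - 1)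
          = ((a : ℤ) + 1) * (∑ i ∈ I, e i) + (r : ℤ) * (((a + 1).choose 2 : ℕ) : ℤ) := by
      intro I _
      have hsplit : ∀ k ∈ Icc 1 (a + 1), (∑ i ∈ I, e i) + estar k - 1
          = ((∑ i ∈ I, e i) - 1) + estar k := fun k _ => by ring
      rw [Finset.sum_congr rfl hsplit, Finset.sum_add_distrib, Finset.sum_const, hB,
        Nat.card_Icc]
      simp only [Nat.add_sub_cancel, nsmul_eq_mul]
      push_cast
      try ring
    rw [Finset.sum_congr rfl hin, Finset.sum_add_distrib, ← Finset.mul_sum,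
      Finset.sum_const, Finset.card_powersetCard, hcard, nsmul_eq_mul]
  -- rewrite index bounds and choose arguments in the goal
  rw [show m' + 1 + a - (m' + 1) = a by omega, show m' + 1 - 1 = m' by omega,
    show m' + 1 + a - 1 = m' + a by omega]
  -- binomial identities
  have id1 : ((m' + 1 + a : ℕ) : ℤ) * ((m' + a).choose m' : ℤ)
      = ((m' + 1 + a).choose (m' + 1) : ℤ) * ((m' + 1 : ℕ) : ℤ) := by
    have h := Nat.add_one_mul_choose_eq (m' + a) m'
    rw [show m' + a + 1 = m' + 1 + a by omega] at h
    exact_mod_cast h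
  have id1b : ((m' + a).choose m' : ℤ) * ((m' + 1 + a : ℕ) : ℤ)
      = ((m' + 1 + a).choose m' : ℤ) * ((a + 1 : ℕ) : ℤ) := by
    have h := Nat.choose_mul_succ_eq (m' + a) m'
    rw [show m' + a + 1 - m' = a + 1 by omega] at h
    rw [show m' + a + 1 = m' + 1 + a by omega] at h
    exact_mod_cast h
  have id2 : ((m' + 1 + a).choose (m' + 1) : ℤ) * ((a.choose 2 : ℕ) : ℤ)
      + ((m' + 1 + a).choose m' : ℤ) * (((a + 1).choose 2 : ℕ) : ℤ)
      = ((m' + a).choose (m' + 1) : ℤ) * (((m' + 1 + a).choose 2 : ℕ) : ℤ) := by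
    exact_mod_cast key2lem m' a
  have id3 : ((m' + a).choose (m' + 1) : ℤ) * ((m' + 1 + a : ℕ) : ℤ)
      = ((m' + 1 + a).choose (m' + 1) : ℤ) * ((a : ℕ) : ℤ) := by
    have h := Nat.choose_mul_succ_eq (m' + a) (m' + 1)
    rw [show m' + a + 1 - (m' + 1) = a by omega] at h
    rw [show m' + a + 1 = m' + 1 + a by omega] at h
    exact_mod_cast h
  -- finish: multiply the goal through by ℓ and combine everything
  have hn0 : ((m' + 1 + a : ℕ) : ℤ) ≠ 0 := by positivity
  apply mul_left_cancel₀ hn0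
  linear_combination (norm := (push_cast; ring1))
    ((m' + 1 + a : ℕ) : ℤ) * hL1 + ((m' + 1 + a : ℕ) : ℤ) * hL2
    + (a : ℤ) * key1 + ((a : ℤ) + 1) * key2
    - (a : ℤ) * N * id1 - (m' : ℤ) * N * id1b
    + ((m' + 1 + a : ℕ) : ℤ) * (r : ℤ) * id2
    - ((m' + 1 + a : ℕ) : ℤ) * id3
    - ((m' + 1 + a : ℕ) : ℤ) * (((m' + a).choose (m' + 1) : ℕ) : ℤ) * hNstar
end

section
/- Sylvester–Franke theorem: for an n×n matrix A over a commutative ring and 1 ≤ m ≤ n, the determinant of the m-th exterior power of A satisfies det(∧^m A) = (det A)^{C(n-1,m-1)}. -/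
open Matrix

/-- The `m`-th compound matrix of an `n × n` matrix `A`: the matrix of its `m × m` minors,
indexed by `m`-element subsets of `Fin n` (i.e. the matrix of `∧^m A` in the standard basis). -/
noncomputable def compoundMatrix {R : Type*} [CommRing R] {n : ℕ} (A : Matrix (Fin n) (Fin n) R)
    (m : ℕ) :
    Matrix {s : Finset (Fin n) // s.card = m} {s : Finset (Fin n) // s.card = m} R :=
  fun s t => (A.submatrix (s.1.orderEmbOfFin s.2) (t.1.orderEmbOfFin t.2)).det

section SylFrAux
open Finset

variable {R : Type*} [CommRing R] {n m : ℕ}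

namespace SylFr

abbrev SS (n m : ℕ) := {s : Finset (Fin n) // s.card = m}

noncomputable def emb (s : SS n m) : Fin m ↪o Fin n := s.1.orderEmbOfFin s.2

lemma emb_mem (s : SS n m) (i : Fin m) : emb s i ∈ s.1 := Finset.orderEmbOfFin_mem _ _ _

lemma emb_range (s : SS n m) : Set.range (emb s) = ↑s.1 := s.1.range_orderEmbOfFin s.2

lemma sum_inj_decomp {β : Type*} [AddCommMonoid β] (g : (Fin m → Fin n) → β) :
    ∑ p ∈ Finset.univ.filter (fun p : Fin m → Fin n => Function.Injective p), g p
      = ∑ s : SS n m, ∑ σ : Equiv.Perm (Fin m), g (emb s ∘ σ) := by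
  rw [← Finset.sum_product']
  refine (Finset.sum_bij (fun a _ => (emb a.1) ∘ a.2) ?_ ?_ ?_ ?_).symm
  · intro a _
    simp only [Finset.mem_filter, Finset.mem_univ, true_and]
    exact (emb a.1).injective.comp a.2.injective
  · rintro ⟨s, σ⟩ _ ⟨t, τ⟩ _ h
    have hs : s = t := by
      apply Subtype.ext
      have : Set.range (emb s ∘ σ) = Set.range (emb t ∘ τ) := by
        simp only at h; rw [h]
      rw [Set.range_comp, Set.range_comp, σ.range_eq_univ, τ.range_eq_univ,
        Set.image_univ, Set.image_univ, emb_range, emb_range] at this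
      exact_mod_cast this
    subst hs
    have hστ : σ = τ := by
      ext x
      simp only at h
      have := (emb s).injective (congrFun h x)
      exact congrArg Fin.val this
    rw [hστ]
  · intro p hp
    have hinj : Function.Injective p := by simpa using hp
    have hcard : (Finset.univ.image p).card = m := by
      rw [Finset.card_image_of_injective _ hinj, Finset.card_univ, Fintype.card_fin]
    set s : SS n m := ⟨Finset.univ.image p, hcard⟩ with hs
    have hmem : ∀ x, p x ∈ s.1 := fun x => Finset.mem_image_of_mem p (Finset.mem_univ x)
    set g0 : Fin m → Fin m := fun x => (s.1.orderIsoOfFin s.2).symm ⟨p x, hmem x⟩ with hg0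
    have key : ∀ x, (s.1.orderIsoOfFin s.2) (g0 x) = ⟨p x, hmem x⟩ := fun x => by
      rw [hg0]; exact OrderIso.apply_symm_apply _ _
    have hg0inj : Function.Injective g0 := by
      intro x y hxy
      apply hinj
      have h2 : (s.1.orderIsoOfFin s.2) (g0 x) = (s.1.orderIsoOfFin s.2) (g0 y) := by rw [hxy]
      rw [key x, key y] at h2
      exact congrArg Subtype.val h2
    refine ⟨(s, Equiv.ofBijective g0 (Finite.injective_iff_bijective.mp hg0inj)),
      Finset.mem_univ _, ?_⟩
    funext x
    show emb s (g0 x) = p x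
    have h3 := congrArg Subtype.val (key x)
    rwa [Finset.coe_orderIsoOfFin_apply] at h3
  · intros; rfl


open Equiv

lemma cauchy_binet (M : Matrix (Fin m) (Fin n) R) (N : Matrix (Fin n) (Fin m) R) :
    (M * N).det = ∑ s : SS n m,
      (M.submatrix id (emb s)).det * (N.submatrix (emb s) id).det := by
  have step1 : (M * N).det
      = ∑ p : Fin m → Fin n, ∑ σ : Perm (Fin m),
          ((Perm.sign σ : ℤ) : R) * ∏ i, M (σ i) (p i) * N (p i) i := by
    simp only [Matrix.det_apply', Matrix.mul_apply, Finset.prod_univ_sum, Finset.mul_sum,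
      Fintype.piFinset_univ]
    rw [Finset.sum_comm]
  have step2 : ∀ p : Fin m → Fin n,
      (∑ σ : Perm (Fin m), ((Perm.sign σ : ℤ) : R) * ∏ i, M (σ i) (p i) * N (p i) i)
        = (∏ i, N (p i) i) * (M.submatrix id p).det := by
    intro p
    rw [Matrix.det_apply', Finset.mul_sum]
    refine Finset.sum_congr rfl fun σ _ => ?_
    simp only [Matrix.submatrix_apply, id_eq, Finset.prod_mul_distrib]
    ring
  have step3 : (M * N).det
      = ∑ p ∈ Finset.univ.filter (fun p : Fin m → Fin n => Function.Injective p),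
          (∏ i, N (p i) i) * (M.submatrix id p).det := by
    rw [step1]
    simp only [step2]
    refine (Finset.sum_subset (Finset.filter_subset _ _) fun p _ hp => ?_).symm
    have hnotinj : ¬ Function.Injective p := by simpa using hp
    obtain ⟨x, y, hpxy, hxy⟩ : ∃ x y, p x = p y ∧ x ≠ y := by
      rw [Function.Injective] at hnotinj
      push_neg at hnotinj
      obtain ⟨x, y, h1, h2⟩ := hnotinj
      exact ⟨x, y, h1, h2⟩
    rw [Matrix.det_zero_of_column_eq hxy (fun k => by simp [hpxy]), mul_zero]
  rw [step3, sum_inj_decomp (fun p => (∏ i, N (p i) i) * (M.submatrix id p).det)]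
  refine Finset.sum_congr rfl fun s _ => ?_
  have hsub : ∀ σ : Perm (Fin m),
      M.submatrix id (emb s ∘ σ) = (M.submatrix id (emb s)).submatrix id σ := by
    intro σ; ext a b; simp [Matrix.submatrix_apply]
  have : ∀ σ : Perm (Fin m),
      (∏ i, N ((emb s ∘ σ) i) i) * (M.submatrix id (emb s ∘ σ)).det
        = (M.submatrix id (emb s)).det *
            (((Perm.sign σ : ℤ) : R) * ∏ i, N (emb s (σ i)) i) := by
    intro σ
    rw [hsub, Matrix.det_permute']
    simp only [Function.comp_apply]
    ring
  simp only [this, ← Finset.mul_sum]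
  congr 1
  rw [Matrix.det_apply']
  refine Finset.sum_congr rfl fun σ _ => ?_
  simp [Matrix.submatrix_apply]

lemma compound_eq (A : Matrix (Fin n) (Fin n) R) (s t : SS n m) :
    compoundMatrix A m s t = (A.submatrix (emb s) (emb t)).det := rfl

lemma compound_mul (A B : Matrix (Fin n) (Fin n) R) :
    compoundMatrix (A * B) m = compoundMatrix A m * compoundMatrix B m := by
  ext s t
  rw [Matrix.mul_apply, compound_eq]
  have : (A * B).submatrix (emb s) (emb t)
      = A.submatrix (emb s) id * B.submatrix id (emb t) := by
    ext a b
    simp [Matrix.mul_apply, Matrix.submatrix_apply]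
  rw [this, cauchy_binet]
  refine Finset.sum_congr rfl fun u _ => ?_
  rw [compound_eq, compound_eq]
  congr 1

lemma compound_map {S : Type*} [CommRing S] (f : R →+* S) (A : Matrix (Fin n) (Fin n) R) :
    compoundMatrix (A.map f) m = (compoundMatrix A m).map f := by
  ext s t
  rw [compound_eq, Matrix.map_apply, compound_eq, RingHom.map_det, Matrix.submatrix_map]
  rfl

lemma compound_diagonal (d : Fin n → R) :
    compoundMatrix (Matrix.diagonal d) m
      = Matrix.diagonal (fun s : SS n m => ∏ k ∈ s.1, d k) := by
  ext s t
  rw [compound_eq]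
  by_cases hst : s = t
  · subst hst
    rw [Matrix.diagonal_apply_eq]
    have : (Matrix.diagonal d).submatrix (emb s) (emb s)
        = Matrix.diagonal (fun i => d (emb s i)) := by
      ext a b
      by_cases hab : a = b
      · subst hab; simp
      · rw [Matrix.submatrix_apply, Matrix.diagonal_apply_ne _ (fun h => hab ((emb s).injective h)),
          Matrix.diagonal_apply_ne _ hab]
    rw [this, Matrix.det_diagonal]
    exact Finset.prod_nbij (emb s) (fun i _ => emb_mem s i)
      (fun a _ b _ h => (emb s).injective h)
      (fun k hk => by
        have : (k : Fin n) ∈ Set.range (emb s) := by rw [emb_range]; exact hk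
        obtain ⟨i, hi⟩ := this
        exact ⟨i, Finset.mem_univ _, hi⟩)
      (fun a _ => rfl)
  · rw [Matrix.diagonal_apply_ne _ hst]
    have hne : ¬ t.1 ⊆ s.1 := by
      intro hsub
      exact hst (Subtype.ext (Finset.eq_of_subset_of_card_le hsub (by rw [s.2, t.2])).symm)
    obtain ⟨b0, hbt, hbs⟩ := Finset.not_subset.mp hne
    have : b0 ∈ Set.range (emb t) := by rw [emb_range]; exact hbt
    obtain ⟨x, hx⟩ := this
    refine Matrix.det_eq_zero_of_column_eq_zero x fun a => ?_
    rw [Matrix.submatrix_apply, hx, Matrix.diagonal_apply_ne]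
    intro h
    exact hbs (h ▸ emb_mem s a)

lemma count_mem (hm : 1 ≤ m) (k : Fin n) :
    (Finset.univ.filter (fun s : SS n m => k ∈ s.1)).card = (n - 1).choose (m - 1) := by
  have hcard : ((Finset.univ : Finset (Fin n)).erase k).card = n - 1 := by
    rw [Finset.card_erase_of_mem (Finset.mem_univ k), Finset.card_univ, Fintype.card_fin]
  rw [← hcard, ← Finset.card_powersetCard (m - 1) ((Finset.univ : Finset (Fin n)).erase k)]
  refine Finset.card_bij' (fun s _ => s.1.erase k) (fun t ht => ⟨insert k t, ?_⟩) ?_ ?_ ?_ ?_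
  · rw [Finset.mem_powersetCard] at ht
    rw [Finset.card_insert_of_notMem (fun hk => (Finset.mem_erase.mp (ht.1 hk)).1 rfl), ht.2]
    omega
  · intro s hs
    rw [Finset.mem_filter] at hs
    rw [Finset.mem_powersetCard]
    exact ⟨Finset.erase_subset_erase _ (Finset.subset_univ _),
      by rw [Finset.card_erase_of_mem hs.2, s.2]⟩
  · intro t ht
    simp only [Finset.mem_filter, Finset.mem_univ, true_and]
    exact Finset.mem_insert_self _ _
  · intro s hs
    rw [Finset.mem_filter] at hs
    exact Subtype.ext (Finset.insert_erase hs.2)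
  · intro t ht
    rw [Finset.mem_powersetCard] at ht
    exact Finset.erase_insert (fun hk => (Finset.mem_erase.mp (ht.1 hk)).1 rfl)

lemma prod_subsets (d : Fin n → R) (hm : 1 ≤ m) :
    ∏ s : SS n m, ∏ k ∈ s.1, d k = (∏ k, d k) ^ (n - 1).choose (m - 1) := by
  have h1 : ∀ s : SS n m, ∏ k ∈ s.1, d k = ∏ k : Fin n, if k ∈ s.1 then d k else 1 := by
    intro s
    rw [Finset.prod_ite_mem Finset.univ s.1 d, Finset.univ_inter]
  simp only [h1]
  rw [Finset.prod_comm]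
  have h2 : ∀ k : Fin n,
      (∏ s : SS n m, if k ∈ s.1 then d k else 1) = d k ^ (n - 1).choose (m - 1) := by
    intro k
    rw [Finset.prod_ite, Finset.prod_const, Finset.prod_const_one, mul_one, count_mem hm]
  simp only [h2]
  rw [Finset.prod_pow]

lemma transvection_apply (i j : Fin n) (c : R) (a b : Fin n) :
    Matrix.transvection i j c a b
      = (if a = b then 1 else 0) + (if i = a ∧ j = b then c else 0) := by
  simp [Matrix.transvection, Matrix.single, Matrix.one_apply]

lemma compound_transvection_zero (i j : Fin n) (c : R) (s t : SS n m) (hst : s ≠ t)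
    (h' : ¬ (i ∈ s.1 ∧ j ∉ s.1 ∧ t.1 = insert j (s.1.erase i))) :
    compoundMatrix (Matrix.transvection i j c) m s t = 0 := by
  rw [compound_eq]
  by_cases hcol : ∃ b0 ∈ t.1, b0 ∉ s.1 ∧ b0 ≠ j
  · obtain ⟨b0, hbt, hbs, hbj⟩ := hcol
    obtain ⟨x, hx⟩ : b0 ∈ Set.range (emb t) := by rw [emb_range]; exact hbt
    refine Matrix.det_eq_zero_of_column_eq_zero x fun a => ?_
    rw [Matrix.submatrix_apply, hx, transvection_apply]
    have h1 : ¬ (emb s a = b0) := fun h => hbs (h ▸ emb_mem s a)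
    have h2 : ¬ (i = emb s a ∧ j = b0) := fun h => hbj h.2.symm
    rw [if_neg h1, if_neg h2, add_zero]
  by_cases hrow : ∃ a0 ∈ s.1, a0 ∉ t.1 ∧ a0 ≠ i
  · obtain ⟨a0, has, hat, hai⟩ := hrow
    obtain ⟨x, hx⟩ : a0 ∈ Set.range (emb s) := by rw [emb_range]; exact has
    refine Matrix.det_eq_zero_of_row_eq_zero x fun b => ?_
    rw [Matrix.submatrix_apply, hx, transvection_apply]
    have h1 : ¬ (a0 = emb t b) := fun h => hat (h.symm ▸ emb_mem t b)
    have h2 : ¬ (i = a0 ∧ j = emb t b) := fun h => hai h.1.symm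
    rw [if_neg h1, if_neg h2, add_zero]
  exfalso
  push_neg at hcol hrow
  -- t \ s ⊆ {j}, s \ t ⊆ {i}
  have hts : t.1 \ s.1 ⊆ {j} := by
    intro b hb
    rw [Finset.mem_sdiff] at hb
    rw [Finset.mem_singleton]
    by_contra hbj
    exact hbj (hcol b hb.1 hb.2)
  have hst' : s.1 \ t.1 ⊆ {i} := by
    intro a ha
    rw [Finset.mem_sdiff] at ha
    rw [Finset.mem_singleton]
    by_contra hai
    exact hai (hrow a ha.1 ha.2)
  have hcards : (s.1 \ t.1).card = (t.1 \ s.1).card := by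
    rw [Finset.card_sdiff_comm (by rw [s.2, t.2])]
  have hne : (s.1 \ t.1).Nonempty := by
    rw [Finset.nonempty_iff_ne_empty]
    intro hemp
    have h1 : s.1 ⊆ t.1 := by
      intro a ha
      by_contra hat
      exact Finset.notMem_empty a (hemp ▸ Finset.mem_sdiff.mpr ⟨ha, hat⟩)
    exact hst (Subtype.ext (Finset.eq_of_subset_of_card_le h1 (by rw [s.2, t.2])))
  have hsi : s.1 \ t.1 = {i} := by
    rcases Finset.subset_singleton_iff.mp hst' with h | h
    · exact absurd h (Finset.nonempty_iff_ne_empty.mp hne)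
    · exact h
  have htj : t.1 \ s.1 = {j} := by
    rcases Finset.subset_singleton_iff.mp hts with h | h
    · rw [h] at hcards
      rw [hsi] at hcards
      simp at hcards
    · exact h
  have his : i ∈ s.1 := (Finset.mem_sdiff.mp (hsi ▸ Finset.mem_singleton_self i)).1
  have hit : i ∉ t.1 := (Finset.mem_sdiff.mp (hsi ▸ Finset.mem_singleton_self i)).2
  have hjt : j ∈ t.1 := (Finset.mem_sdiff.mp (htj ▸ Finset.mem_singleton_self j)).1
  have hjs : j ∉ s.1 := (Finset.mem_sdiff.mp (htj ▸ Finset.mem_singleton_self j)).2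
  refine h' ⟨his, hjs, ?_⟩
  ext b
  simp only [Finset.mem_insert, Finset.mem_erase]
  constructor
  · intro hbt
    by_cases hb : b ∈ s.1
    · refine Or.inr ⟨fun h => hit (h ▸ hbt), hb⟩
    · left
      have : b ∈ t.1 \ s.1 := Finset.mem_sdiff.mpr ⟨hbt, hb⟩
      rw [htj, Finset.mem_singleton] at this
      exact this
  · rintro (rfl | ⟨hbi, hbs⟩)
    · exact hjt
    · by_contra hbt
      have : b ∈ s.1 \ t.1 := Finset.mem_sdiff.mpr ⟨hbs, hbt⟩
      rw [hsi, Finset.mem_singleton] at this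
      exact hbi this

lemma compound_transvection_diag (i j : Fin n) (hij : i ≠ j) (c : R) (s : SS n m) :
    compoundMatrix (Matrix.transvection i j c) m s s = 1 := by
  rw [compound_eq]
  by_cases his : i ∈ s.1
  · by_cases hjs : j ∈ s.1
    · -- submatrix is itself a transvection
      obtain ⟨x, hx⟩ : i ∈ Set.range (emb s) := by rw [emb_range]; exact his
      obtain ⟨y, hy⟩ : j ∈ Set.range (emb s) := by rw [emb_range]; exact hjs
      have hxy : x ≠ y := fun h => hij (by rw [← hx, ← hy, h])
      have : (Matrix.transvection i j c).submatrix (emb s) (emb s)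
          = Matrix.transvection x y c := by
        ext a b
        rw [Matrix.submatrix_apply, transvection_apply, transvection_apply]
        congr 1
        · by_cases hab : a = b
          · subst hab; simp
          · rw [if_neg (fun h => hab ((emb s).injective h)), if_neg hab]
        · by_cases h : x = a ∧ y = b
          · rw [if_pos ⟨by rw [← hx, h.1], by rw [← hy, h.2]⟩, if_pos h]
          · have : ¬ (i = emb s a ∧ j = emb s b) := by
              intro hc
              exact h ⟨(emb s).injective (by rw [hx, hc.1]),
                (emb s).injective (by rw [hy, hc.2])⟩
            rw [if_neg this, if_neg h]
      rw [this, Matrix.det_transvection_of_ne _ _ hxy]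
    · have : (Matrix.transvection i j c).submatrix (emb s) (emb s) = 1 := by
        ext a b
        rw [Matrix.submatrix_apply, transvection_apply]
        have h2 : ¬ (i = emb s a ∧ j = emb s b) := fun h => hjs (h.2 ▸ emb_mem s b)
        rw [if_neg h2, add_zero, Matrix.one_apply]
        by_cases hab : a = b
        · subst hab; simp
        · rw [if_neg (fun h => hab ((emb s).injective h)), if_neg hab]
      rw [this, Matrix.det_one]
  · have : (Matrix.transvection i j c).submatrix (emb s) (emb s) = 1 := by
      ext a b
      rw [Matrix.submatrix_apply, transvection_apply]
      have h2 : ¬ (i = emb s a ∧ j = emb s b) := fun h => his (h.1 ▸ emb_mem s a)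
      rw [if_neg h2, add_zero, Matrix.one_apply]
      by_cases hab : a = b
      · subst hab; simp
      · rw [if_neg (fun h => hab ((emb s).injective h)), if_neg hab]
    rw [this, Matrix.det_one]

/-- weight function for block-triangularity -/
def wt (i j : Fin n) (s : SS n m) : ℤ :=
  (if j ∈ s.1 then 1 else 0) - (if i ∈ s.1 then 1 else 0)

lemma det_compound_transvection (i j : Fin n) (hij : i ≠ j) (c : R) :
    (compoundMatrix (Matrix.transvection i j c) m).det = 1 := by
  have hbt : (compoundMatrix (Matrix.transvection i j c) m).BlockTriangular (wt i j) := by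
    intro s t hlt
    by_cases hst : s = t
    · subst hst; exact absurd hlt (lt_irrefl _)
    refine compound_transvection_zero i j c s t hst ?_
    rintro ⟨his, hjs, ht⟩
    have h1 : wt i j s = -1 := by simp [wt, his, hjs]
    have h2 : wt i j t = 1 := by
      have hjt : j ∈ t.1 := by rw [ht]; exact Finset.mem_insert_self _ _
      have hit : i ∉ t.1 := by
        rw [ht]
        simp only [Finset.mem_insert, Finset.mem_erase]
        rintro (h | ⟨h, _⟩)
        · exact hij h
        · exact h rfl
      simp [wt, hjt, hit]
    rw [h1, h2] at hlt
    omega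
  rw [hbt.det]
  refine Finset.prod_eq_one fun a _ => ?_
  have : (compoundMatrix (Matrix.transvection i j c) m).toSquareBlock (wt i j) a = 1 := by
    ext s t
    by_cases hst : s = t
    · subst hst
      rw [Matrix.one_apply_eq]
      exact compound_transvection_diag i j hij c s.1
    · rw [Matrix.one_apply_ne hst]
      have hst' : s.1 ≠ t.1 := fun h => hst (Subtype.ext h)
      refine compound_transvection_zero i j c s.1 t.1 hst' ?_
      rintro ⟨his, hjs, ht⟩
      have h1 : wt i j s.1 = -1 := by simp [wt, his, hjs]
      have h2 : wt i j t.1 = 1 := by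
        have hjt : j ∈ t.1.1 := by rw [ht]; exact Finset.mem_insert_self _ _
        have hit : i ∉ t.1.1 := by
          rw [ht]
          simp only [Finset.mem_insert, Finset.mem_erase]
          rintro (h | ⟨h, _⟩)
          · exact hij h
          · exact h rfl
        simp [wt, hjt, hit]
      rw [s.2, t.2] at *
      omega
  rw [this, Matrix.det_one]

lemma det_compound_transvection' (t : Matrix.TransvectionStruct (Fin n) R) :
    (compoundMatrix t.toMatrix m).det = 1 := by
  cases t with
  | mk i j hij c => rw [Matrix.TransvectionStruct.toMatrix_mk]; exact det_compound_transvection i j hij c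

lemma det_compound_list_left (L : List (Matrix.TransvectionStruct (Fin n) R))
    (B : Matrix (Fin n) (Fin n) R) :
    (compoundMatrix ((L.map Matrix.TransvectionStruct.toMatrix).prod * B) m).det
      = (compoundMatrix B m).det := by
  induction L with
  | nil => simp
  | cons t L ih =>
    rw [List.map_cons, List.prod_cons, mul_assoc, compound_mul, Matrix.det_mul,
      det_compound_transvection', one_mul, ih]

lemma det_compound_list_right (L : List (Matrix.TransvectionStruct (Fin n) R))
    (B : Matrix (Fin n) (Fin n) R) :
    (compoundMatrix (B * (L.map Matrix.TransvectionStruct.toMatrix).prod) m).det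
      = (compoundMatrix B m).det := by
  induction L generalizing B with
  | nil => simp
  | cons t L ih =>
    rw [List.map_cons, List.prod_cons, ← mul_assoc, ih, compound_mul, Matrix.det_mul,
      det_compound_transvection', mul_one]

lemma field_case {K : Type*} [Field K] (A : Matrix (Fin n) (Fin n) K) (hm : 1 ≤ m) :
    (compoundMatrix A m).det = A.det ^ (n - 1).choose (m - 1) := by
  obtain ⟨L, L', D, h⟩ := Matrix.Pivot.exists_list_transvec_mul_diagonal_mul_list_transvec A
  rw [h, mul_assoc, det_compound_list_left, det_compound_list_right,
    compound_diagonal, Matrix.det_diagonal, prod_subsets D hm]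
  rw [Matrix.det_mul, Matrix.det_mul, Matrix.TransvectionStruct.det_toMatrix_prod,
    Matrix.TransvectionStruct.det_toMatrix_prod, one_mul, mul_one, Matrix.det_diagonal]

end SylFr


end SylFrAux

open SylFr

/-- **Sylvester–Franke theorem.** For an `n × n` matrix `A` over a commutative
ring and `1 ≤ m ≤ n`, the determinant of the `m`-th exterior power (compound matrix) of `A`
satisfies `det(∧^m A) = (det A)^{C(n-1,m-1)}`. -/
theorem stmt19 {R : Type*} [CommRing R] {n : ℕ} (A : Matrix (Fin n) (Fin n) R) (m : ℕ)
    (hm : 1 ≤ m) (hmn : m ≤ n) :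
    (compoundMatrix A m).det = A.det ^ Nat.choose (n - 1) (m - 1) := by
  classical
  set P := MvPolynomial (Fin n × Fin n) ℤ with hPdef
  set X : Matrix (Fin n) (Fin n) P := fun p q => MvPolynomial.X (p, q) with hXdef
  have hP : (compoundMatrix X m).det = X.det ^ (n - 1).choose (m - 1) := by
    set K := FractionRing P with hKdef
    have hinj : Function.Injective (algebraMap P K) := IsFractionRing.injective P K
    have hK := field_case (X.map (algebraMap P K)) hm
    rw [compound_map, ← RingHom.mapMatrix_apply, ← RingHom.mapMatrix_apply,
      ← RingHom.map_det, ← RingHom.map_det, ← map_pow] at hK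
    exact hinj hK
  set φ : P →+* R := MvPolynomial.eval₂Hom (Int.castRingHom R) (fun p => A p.1 p.2) with hφdef
  have hXA : X.map φ = A := by
    ext p q
    show φ (X p q) = A p q
    rw [hXdef, hφdef]
    exact MvPolynomial.eval₂Hom_X' _ _ _
  have h2 := congrArg φ hP
  rw [map_pow, RingHom.map_det, RingHom.map_det, RingHom.mapMatrix_apply,
    RingHom.mapMatrix_apply, ← compound_map, hXA] at h2
  exact h2
end
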